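/- For every vertex x ∈ V and every finite set P ⊆ V, the single-selection penalty satisfies exactly f({x},P) = f({r},P) − |P ∩ des(x)| · dist(r,x); that is, the saving of selecting the single vertex x over the root equals the selected gain IG(x) = |P ∩ des(x)| · dist(r,x). -/

import Mathlib

/-! No vertex has a larger penalty than the root, so `f({x},t) = f⟨x,t⟩`, which is
`depth t - depth x` for `t ∈ des(x)` and `depth t` otherwise; summing over `P` gives the claim. -/

open scoped Classical

/-- Pair-wise penalty `f⟨v,t⟩`: `dist(v,t) = depth t - depth v` if `v → t`,
and `dist(r,t) = depth t` otherwise. -/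
noncomputable def fpair {V : Type*} (R : V → V → Prop) (depth : V → ℕ) (v t : V) : ℕ :=
  if R v t then depth t - depth v else depth t

/-- Set penalty `f(S,t) = min_{v ∈ S ∪ {r}} f⟨v,t⟩`. -/
noncomputable def fsel {V : Type*} (R : V → V → Prop) (depth : V → ℕ) (r : V)
    (S : Finset V) (t : V) : ℕ :=
  (insert r S).inf' (Finset.insert_nonempty r S) fun v => fpair R depth v t

/-- Set-wise penalty `f(S,P) = Σ_{t ∈ P} f(S,t)`. -/
noncomputable def fsum {V : Type*} (R : V → V → Prop) (depth : V → ℕ) (r : V)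
    (S : Finset V) (P : Finset V) : ℕ :=
  ∑ t ∈ P, fsel R depth r S t

/-- Selected gain `IG(x) = |P ∩ des(x)| · dist(r,x)` (with `dist(r,x) = depth x`). -/
noncomputable def selGain {V : Type*} (R : V → V → Prop) (depth : V → ℕ)
    (P : Finset V) (x : V) : ℕ :=
  (P.filter fun t => R x t).card * depth x

section SingleSelection

variable {V : Type*} {R : V → V → Prop} {depth : V → ℕ} {r : V}

theorem fpair_le_depth (v t : V) : fpair R depth v t ≤ depth t := by
  unfold fpair
  split <;> omega

theorem fpair_root (hroot : ∀ v, R r v) (hdepth_root : depth r = 0) (t : V) :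
    fpair R depth r t = depth t := by
  simp [fpair, hroot t, hdepth_root]

theorem fpair_eq_depth_sub_ite (hdepth_mono : ∀ u v, R u v → depth u ≤ depth v) (x t : V) :
    (fpair R depth x t : ℤ) = depth t - if R x t then (depth x : ℤ) else 0 := by
  unfold fpair
  by_cases h : R x t
  · have := hdepth_mono x t h
    simp only [h, if_true]
    omega
  · simp [h]

theorem fsel_singleton (hroot : ∀ v, R r v) (hdepth_root : depth r = 0) (x t : V) :
    fsel R depth r {x} t = fpair R depth x t := by
  refine le_antisymm (Finset.inf'_le _ (by simp)) (Finset.le_inf' _ _ fun v hv => ?_)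
  rcases Finset.mem_insert.1 hv with rfl | hv
  · rw [fpair_root hroot hdepth_root]
    exact fpair_le_depth x t
  · rw [Finset.mem_singleton.1 hv]

theorem fsum_singleton (hroot : ∀ v, R r v) (hdepth_root : depth r = 0) (x : V)
    (P : Finset V) : fsum R depth r {x} P = ∑ t ∈ P, fpair R depth x t :=
  Finset.sum_congr rfl fun t _ => fsel_singleton hroot hdepth_root x t

end SingleSelection

theorem stmt12_general {V : Type*} (R : V → V → Prop) (r : V) (depth : V → ℕ)
    (hroot : ∀ v, R r v)
    (hdepth_root : depth r = 0)
    (hdepth_mono : ∀ u v, R u v → depth u ≤ depth v)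
    (x : V) (P : Finset V) :
    (fsum R depth r {x} P : ℤ) =
      (fsum R depth r {r} P : ℤ) - (selGain R depth P x : ℤ) := by
  have hroot_sum : fsum R depth r {r} P = ∑ t ∈ P, depth t := by
    simp only [fsum_singleton hroot hdepth_root, fpair_root hroot hdepth_root]
  rw [fsum_singleton hroot hdepth_root, hroot_sum, selGain]
  push_cast
  simp only [fpair_eq_depth_sub_ite hdepth_mono, Finset.sum_sub_distrib, ← Finset.sum_filter,
    Finset.sum_const, nsmul_eq_mul]

/-- for every `x ∈ V` and finite `P ⊆ V`,
`f({x},P) = f({r},P) − |P ∩ des(x)| · dist(r,x)`, i.e. the saving of selecting the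
single vertex `x` over the root equals `IG(x)`. -/
theorem stmt12 {V : Type*} [Fintype V] (R : V → V → Prop) (r : V) (depth : V → ℕ)
    (hrefl : ∀ v, R v v)
    (htrans : ∀ u v w, R u v → R v w → R u w)
    (hanti : ∀ u v, R u v → R v u → u = v)
    (hroot : ∀ v, R r v)
    (hchain : ∀ u v w, R u v → R w v → R u w ∨ R w u)
    (hdepth_root : depth r = 0)
    (hdepth_mono : ∀ u v, R u v → depth u ≤ depth v)
    (hdepth_eq : ∀ u v, R u v → (depth u = depth v ↔ u = v))
    (x : V) (P : Finset V) :
    (fsum R depth r {x} P : ℤ) =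
      (fsum R depth r {r} P : ℤ) - (selGain R depth P x : ℤ) :=
  stmt12_general R r depth hroot hdepth_root hdepth_mono x P
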